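/- For every natural number r and all linear forms L₁, …, L_r ∈ ℂ⁵, the contraction I(F) of the symmetric tensor F defined by F(i,j,k) = Σ_{ν=1}^{r} (L_ν)_i (L_ν)_j (L_ν)_k equals the sum over all functions c : {0,1,…,14} → {1,…,r} of the product over b = 1,…,9 of det M(b,c), where M(b,c) is the 5×5 complex matrix whose k-th row is the vector L_{c(B_b(k))}. -/
import Mathlib


/-- The Levi-Civita symbol on `n` indices: the sign of `f` if `f` is a
bijection, and `0` otherwise. -/
noncomputable def eps {n : ℕ} (f : Fin n → Fin n) : ℂ :=
  if h : Function.Bijective f then ((Equiv.Perm.sign (Equiv.ofBijective f h) : ℤ) : ℂ) else 0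

/-- The nine ordered blocks, as 5-tuples of elements of `Fin 15`. -/
def B : Fin 9 → Fin 5 → Fin 15 :=
  ![![1, 3, 2, 0, 4], ![6, 0, 5, 8, 7], ![9, 10, 13, 11, 12], ![14, 9, 10, 1, 5],
    ![1, 3, 2, 6, 11], ![12, 4, 5, 8, 7], ![14, 9, 13, 2, 7], ![14, 10, 13, 3, 8],
    ![6, 11, 0, 12, 4]]

/-- The three slots `(b, k)` (block index, position) containing each vertex
`v ∈ Fin 15`, i.e. `B (slots v i).1 (slots v i).2 = v`. -/
def slots : Fin 15 → Fin 3 → Fin 9 × Fin 5 :=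
  ![![(0, 3), (1, 1), (8, 2)],
    ![(0, 0), (3, 3), (4, 0)],
    ![(0, 2), (4, 2), (6, 3)],
    ![(0, 1), (4, 1), (7, 3)],
    ![(0, 4), (5, 1), (8, 4)],
    ![(1, 2), (3, 4), (5, 2)],
    ![(1, 0), (4, 3), (8, 0)],
    ![(1, 4), (5, 4), (6, 4)],
    ![(1, 3), (5, 3), (7, 4)],
    ![(2, 0), (3, 1), (6, 1)],
    ![(2, 1), (3, 2), (7, 1)],
    ![(2, 3), (4, 4), (8, 1)],
    ![(2, 4), (5, 0), (8, 3)],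
    ![(2, 2), (6, 2), (7, 2)],
    ![(3, 0), (6, 0), (7, 0)]]

/-- Ottaviani's degree 15 contraction `I(F)` of a (symmetric) tensor
`F : (Fin 5)³ → ℂ`: the sum over all assignments `φ` of an index in `Fin 5` to
each of the 45 slots of the product of the Levi-Civita symbols of the nine
blocks times the product over the 15 vertices of `F` evaluated at the indices
assigned to the three slots of that vertex. -/
noncomputable def I (F : Fin 5 → Fin 5 → Fin 5 → ℂ) : ℂ :=
  ∑ φ : Fin 9 × Fin 5 → Fin 5,
    (∏ b : Fin 9, eps fun k => φ (b, k)) *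
      ∏ v : Fin 15, F (φ (slots v 0)) (φ (slots v 1)) (φ (slots v 2))


set_option maxRecDepth 10000

lemma eps_of_bij {n : ℕ} (f : Fin n → Fin n) (h : Function.Bijective f) :
    eps f = ((Equiv.Perm.sign (Equiv.ofBijective f h) : ℤ) : ℂ) := dif_pos h

lemma eps_of_not_bij {n : ℕ} (f : Fin n → Fin n) (h : ¬ Function.Bijective f) :
    eps f = 0 := dif_neg h

lemma det_eq (M : Matrix (Fin 5) (Fin 5) ℂ) :
    (∑ f : Fin 5 → Fin 5, eps f * ∏ k, M k (f k)) = M.det := by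
  classical
  rw [← Matrix.det_transpose, Matrix.det_apply]
  rw [← Finset.sum_filter_of_ne (p := fun f : Fin 5 → Fin 5 => Function.Bijective f)
    (by intro f _ h; by_contra hb; exact h (by rw [eps_of_not_bij f hb, zero_mul]))]
  refine Finset.sum_bij' (fun f hf => Equiv.ofBijective f (by simpa using hf))
    (fun σ _ => ⇑σ) ?_ ?_ ?_ ?_ ?_
  · intros; exact Finset.mem_univ _
  · intro σ _; exact Finset.mem_filter.2 ⟨Finset.mem_univ _, σ.bijective⟩
  · intro f hf; rfl
  · intro σ _; exact Equiv.ext fun x => rfl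
  · intro f hf
    have hb : Function.Bijective f := by simpa using hf
    rw [eps_of_bij f hb]
    simp [Matrix.transpose_apply, Units.smul_def, zsmul_eq_mul, mul_comm]

lemma hB : ∀ (v : Fin 15) (i : Fin 3), B (slots v i).1 (slots v i).2 = v := by decide

set_option maxHeartbeats 1000000 in
lemma hinj : Function.Injective (fun p : Fin 15 × Fin 3 => slots p.1 p.2) := by decide

lemma hbij : Function.Bijective (fun p : Fin 15 × Fin 3 => slots p.1 p.2) :=
  (Fintype.bijective_iff_injective_and_card _).mpr ⟨hinj, by simp⟩

/-- For every `r` and all linear forms `L₁, …, L_r ∈ ℂ⁵`, the contraction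
`I(F)` of `F(i,j,k) = Σ_ν (L_ν)_i (L_ν)_j (L_ν)_k` equals the sum over all
functions `c : Fin 15 → Fin r` of the product over the nine blocks of the
determinant of the matrix whose `k`-th row is `L (c (B b k))`. -/
theorem contraction_eq_multilinear_expansion (r : ℕ) (L : Fin r → Fin 5 → ℂ) :
    I (fun i j k => ∑ ν : Fin r, L ν i * L ν j * L ν k) =
      ∑ c : Fin 15 → Fin r, ∏ b : Fin 9,
        (Matrix.of fun k j : Fin 5 => L (c (B b k)) j).det := by
  classical
  unfold I
  have hF : ∀ φ : Fin 9 × Fin 5 → Fin 5,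
      (∏ v : Fin 15, ∑ ν : Fin r,
        L ν (φ (slots v 0)) * L ν (φ (slots v 1)) * L ν (φ (slots v 2)))
      = ∑ c : Fin 15 → Fin r, ∏ v : Fin 15,
          L (c v) (φ (slots v 0)) * L (c v) (φ (slots v 1)) * L (c v) (φ (slots v 2)) := by
    intro φ
    rw [Finset.prod_univ_sum]
    rw [Fintype.piFinset_univ]
  simp only [hF, Finset.mul_sum]
  rw [Finset.sum_comm]
  refine Finset.sum_congr rfl fun c _ => ?_
  have h1 : ∀ φ : Fin 9 × Fin 5 → Fin 5,
      (∏ v : Fin 15, L (c v) (φ (slots v 0)) * L (c v) (φ (slots v 1)) * L (c v) (φ (slots v 2)))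
      = ∏ b : Fin 9, ∏ k : Fin 5, L (c (B b k)) (φ (b, k)) := by
    intro φ
    have h3 : ∀ v : Fin 15,
        L (c v) (φ (slots v 0)) * L (c v) (φ (slots v 1)) * L (c v) (φ (slots v 2))
        = ∏ i : Fin 3, L (c v) (φ (slots v i)) :=
      fun v => (Fin.prod_univ_three (fun i => L (c v) (φ (slots v i)))).symm
    simp only [h3]
    rw [← Fintype.prod_prod_type (f := fun p : Fin 15 × Fin 3 => L (c p.1) (φ (slots p.1 p.2)))]
    rw [Fintype.prod_bijective (fun p : Fin 15 × Fin 3 => slots p.1 p.2) hbij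
      (fun p => L (c p.1) (φ (slots p.1 p.2)))
      (fun q : Fin 9 × Fin 5 => L (c (B q.1 q.2)) (φ q))
      (fun p => by
        show L (c p.1) (φ (slots p.1 p.2))
          = L (c (B (slots p.1 p.2).1 (slots p.1 p.2).2)) (φ (slots p.1 p.2))
        rw [hB p.1 p.2])]
    exact Fintype.prod_prod_type _
  simp only [h1]
  simp only [← Finset.prod_mul_distrib]
  rw [← Equiv.sum_comp (Equiv.curry (Fin 9) (Fin 5) (Fin 5)).symm]
  have h2 : ∀ ψ : Fin 9 → Fin 5 → Fin 5,
      (∏ b : Fin 9, (eps fun k => (Equiv.curry (Fin 9) (Fin 5) (Fin 5)).symm ψ (b, k)) *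
        ∏ k : Fin 5, L (c (B b k)) ((Equiv.curry (Fin 9) (Fin 5) (Fin 5)).symm ψ (b, k)))
      = ∏ b : Fin 9, eps (ψ b) * ∏ k : Fin 5, L (c (B b k)) (ψ b k) := by
    intro ψ; simp only [Equiv.curry_symm_apply, Function.uncurry_apply_pair]
  simp only [h2]
  rw [← Fintype.piFinset_univ, ← Finset.prod_univ_sum
    (t := fun _ : Fin 9 => (Finset.univ : Finset (Fin 5 → Fin 5)))
    (f := fun b g => eps g * ∏ k : Fin 5, L (c (B b k)) (g k))]
  exact Finset.prod_congr rfl fun b _ => det_eq _
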